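/- Let (Ω, 𝓕, μ) be a probability space, γ < 0, and H : Ω → ℝ measurable such that e^{H/(γ−1)} is μ-integrable. Then for every measurable ξ : Ω → ℝ with ξ > 0 μ-a.e., ξ integrable, and ∫ ξ dμ = 1, one has ∫ ξ^γ · e^{−H} dμ ≥ (∫ e^{H/(γ−1)} dμ)^{1−γ}, where the left-hand side is allowed to be +∞. -/

import Mathlib

open MeasureTheory

/-- Reverse Hölder-type bound for the power-utility case with `γ < 0`: for any a.e.
positive density `ξ` (integrable, with `∫ ξ dμ = 1`) and measurable `H` with
`e^{H/(γ-1)}` integrable, `∫ ξ^γ e^{-H} dμ ≥ (∫ e^{H/(γ-1)} dμ)^{1-γ}`, where the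
left-hand side is allowed to be `+∞`. -/
theorem power_divergence_lower_bound
    {Ω : Type*} [MeasurableSpace Ω] (μ : Measure Ω) [IsProbabilityMeasure μ]
    (γ : ℝ) (hγ : γ < 0)
    (H : Ω → ℝ) (hH : Measurable H)
    (hHint : Integrable (fun ω => Real.exp (H ω / (γ - 1))) μ)
    (ξ : Ω → ℝ) (hξ : Measurable ξ) (hξ0 : ∀ᵐ ω ∂μ, 0 < ξ ω)
    (hξint : Integrable ξ μ) (hξ1 : ∫ ω, ξ ω ∂μ = 1) :
    ENNReal.ofReal ((∫ ω, Real.exp (H ω / (γ - 1)) ∂μ) ^ (1 - γ))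
      ≤ ∫⁻ ω, ENNReal.ofReal (ξ ω ^ γ * Real.exp (-H ω)) ∂μ := by
  have hq0 : (0:ℝ) < 1 - γ := by linarith
  set q : ℝ := 1 - γ with hq
  set p : ℝ := (1 - γ) / (-γ) with hp
  have hγ0 : (0:ℝ) < -γ := by linarith
  have hpq : p.HolderConjugate q := by
    rw [Real.holderConjugate_iff]
    constructor
    · rw [hp, lt_div_iff₀ hγ0]; linarith
    · have h1 : (1:ℝ) - γ ≠ 0 := by linarith
      rw [hp, hq]; field_simp [h1, hγ.ne]; ring
  have h1p : 1/p = -γ / (1 - γ) := by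
    rw [hp, one_div_div]
  have h1pq : 0 ≤ 1/p := le_of_lt hpq.one_div_pos
  have h1qq : 0 ≤ 1/q := le_of_lt hpq.symm.one_div_pos
  set F : Ω → ENNReal := fun ω => ENNReal.ofReal (ξ ω) ^ (1/p) with hF
  set G : Ω → ENNReal := fun ω =>
    ENNReal.ofReal (ξ ω ^ γ * Real.exp (-H ω)) ^ (1/q) with hG
  have hFm : AEMeasurable F μ :=
    (hξ.ennreal_ofReal.pow_const _).aemeasurable
  have hGm : AEMeasurable G μ := by
    have : Measurable fun ω => ξ ω ^ γ * Real.exp (-H ω) :=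
      by fun_prop
    exact (this.ennreal_ofReal.pow_const _).aemeasurable
  have holder := ENNReal.lintegral_mul_le_Lp_mul_Lq μ hpq hFm hGm
  -- compute ∫⁻ F^p = 1
  have hFp : ∀ ω, F ω ^ p = ENNReal.ofReal (ξ ω) := by
    intro ω
    rw [hF, ← ENNReal.rpow_mul, one_div, inv_mul_cancel₀ hpq.ne_zero, ENNReal.rpow_one]
  have hGq : ∀ ω, G ω ^ q = ENNReal.ofReal (ξ ω ^ γ * Real.exp (-H ω)) := by
    intro ω
    rw [hG, ← ENNReal.rpow_mul, one_div, inv_mul_cancel₀ hpq.symm.ne_zero, ENNReal.rpow_one]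
  have hintF : ∫⁻ ω, F ω ^ p ∂μ = 1 := by
    simp only [hFp]
    rw [← ofReal_integral_eq_lintegral_ofReal hξint (hξ0.mono fun ω h => h.le), hξ1,
      ENNReal.ofReal_one]
  -- the product is a.e. equal to exp(H/(γ-1))
  have hFG : ∀ᵐ ω ∂μ, (F * G) ω = ENNReal.ofReal (Real.exp (H ω / (γ - 1))) := by
    filter_upwards [hξ0] with ω hω
    have hξγ : 0 ≤ ξ ω ^ γ := Real.rpow_nonneg hω.le γ
    have hmul : 0 ≤ ξ ω ^ γ * Real.exp (-H ω) :=
      mul_nonneg hξγ (Real.exp_pos _).le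
    show ENNReal.ofReal (ξ ω) ^ (1/p) * ENNReal.ofReal (ξ ω ^ γ * Real.exp (-H ω)) ^ (1/q)
        = ENNReal.ofReal (Real.exp (H ω / (γ - 1)))
    rw [ENNReal.ofReal_rpow_of_nonneg hω.le h1pq,
      ENNReal.ofReal_rpow_of_nonneg hmul h1qq, ← ENNReal.ofReal_mul (by positivity)]
    congr 1
    rw [Real.mul_rpow hξγ (Real.exp_pos _).le, ← Real.rpow_mul hω.le, ← Real.exp_mul,
      ← mul_assoc, ← Real.rpow_add hω]
    have hz : 1/p + γ * (1/q) = 0 := by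
      have h1 : (1:ℝ) - γ ≠ 0 := by linarith
      rw [h1p, hq]; field_simp [h1]; ring
    have he : -H ω * (1/q) = H ω / (γ - 1) := by
      rw [hq]
      have h1 : (1:ℝ) - γ ≠ 0 := ne_of_gt hq0
      have h2 : γ - 1 ≠ 0 := by intro h; apply h1; linarith
      field_simp
      ring
    rw [hz, Real.rpow_zero, one_mul, he]
  have key : ENNReal.ofReal (∫ ω, Real.exp (H ω / (γ - 1)) ∂μ)
      ≤ (∫⁻ ω, G ω ^ q ∂μ) ^ (1/q) := by
    rw [ofReal_integral_eq_lintegral_ofReal hHint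
      (Filter.Eventually.of_forall fun ω => (Real.exp_pos _).le)]
    calc ∫⁻ ω, ENNReal.ofReal (Real.exp (H ω / (γ - 1))) ∂μ
        = ∫⁻ ω, (F * G) ω ∂μ := (lintegral_congr_ae hFG).symm
      _ ≤ (∫⁻ ω, F ω ^ p ∂μ) ^ (1/p) * (∫⁻ ω, G ω ^ q ∂μ) ^ (1/q) := holder
      _ = (∫⁻ ω, G ω ^ q ∂μ) ^ (1/q) := by rw [hintF, ENNReal.one_rpow, one_mul]
  have := ENNReal.rpow_le_rpow key (le_of_lt hq0)
  rw [← ENNReal.rpow_mul, one_div, inv_mul_cancel₀ hpq.symm.ne_zero, ENNReal.rpow_one] at this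
  calc ENNReal.ofReal ((∫ ω, Real.exp (H ω / (γ - 1)) ∂μ) ^ (1 - γ))
      = ENNReal.ofReal (∫ ω, Real.exp (H ω / (γ - 1)) ∂μ) ^ q := by
        rw [hq]
        exact (ENNReal.ofReal_rpow_of_nonneg
          (integral_nonneg fun ω => (Real.exp_pos _).le) (by linarith : (0:ℝ) ≤ 1 - γ)).symm
    _ ≤ ∫⁻ ω, G ω ^ q ∂μ := this
    _ = ∫⁻ ω, ENNReal.ofReal (ξ ω ^ γ * Real.exp (-H ω)) ∂μ := by
        simp only [hGq]
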